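/- Let G be a finite group acting by ℤ-linear automorphisms on a free ℤ-module Λ of finite rank, and let V := ℚ ⊗_ℤ Λ. Let 1 = e_1 + … + e_r be the decomposition of 1 ∈ ℚ[G] into pairwise orthogonal central idempotents, and for each i let e_i = p_{i,1} + … + p_{i,n_i} be a decomposition into pairwise orthogonal idempotents that are pairwise conjugate by units of e_i·ℚ[G]. Then rank Λ = Σ_{i=1}^r n_i · rank(Λ ∩ p_{i,1} V), and the direct sum of all the subgroups Λ ∩ p_{i,j} V has finite index in Λ. -/

import Mathlib

/-!
The idempotents `p i j` form one complete family of orthogonal idempotents of `ℚ[G]`, so `V` is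
the internal direct sum of the subspaces `p i j V`. Conjugate idempotents have images of equal
dimension: if `f = u p v` with `v u = e` and `p e = p`, then `x = u p` and `y = p v` satisfy
`x y = f` and `y x = p`, so `f = f² = x p y` and `p = p² = y f x` factor through each other.
Since `Λ` spans `V` over `ℚ`, each `Λ ∩ p i j V` spans `p i j V`, so its rank is `dim p i j V`;
and since their sum spans `V`, every element of `Λ` has a nonzero multiple in the sum, which
makes the finitely generated quotient torsion, hence finite.
-/

open scoped TensorProduct
open Module nonZeroDivisors

theorem CompleteOrthogonalIdempotents.sigma {A ι : Type*} [Ring A] [Fintype ι] {κ : ι → Type*}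
    [∀ i, Fintype (κ i)] {e : ι → A} (he : CompleteOrthogonalIdempotents e)
    {p : ∀ i, κ i → A} (hp : ∀ i, OrthogonalIdempotents (p i)) (hpe : ∀ i, ∑ j, p i j = e i) :
    CompleteOrthogonalIdempotents (fun x : Σ i, κ i => p x.1 x.2) := by
  have mul_e : ∀ i j, p i j * e i = p i j := fun i j => by
    rw [← hpe, (hp i).mul_sum_of_mem (Finset.mem_univ j)]
  have e_mul : ∀ i j, e i * p i j = p i j := fun i j => by
    classical
    simp [← hpe, Finset.sum_mul, (hp i).mul_eq]
  refine CompleteOrthogonalIdempotents.iff_ortho_complete.2 ⟨?_, ?_⟩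
  · rintro ⟨i, j⟩ ⟨i', k⟩ hne
    by_cases hi : i = i'
    · subst hi
      exact (hp i).ortho fun hjk => hne (Sigma.ext rfl (heq_of_eq hjk))
    · calc p i j * p i' k = p i j * (e i * e i') * p i' k := by
            rw [mul_assoc, mul_assoc, e_mul, ← mul_assoc, mul_e]
        _ = 0 := by rw [he.ortho hi, mul_zero, zero_mul]
  · rw [Fintype.sum_sigma]
    simp only [hpe, he.complete]

namespace Module.End

variable {K V : Type*} [Semiring K] [AddCommGroup V] [Module K V]

theorem rank_le_of_mul_eq_of_mul_eq {f g x y : End K V} (hf : IsIdempotentElem f)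
    (hxy : x * y = f) (hyx : y * x = g) : f.rank ≤ g.rank :=
  calc f.rank = ((x * g) * y).rank := by rw [← hf.eq, ← hxy, ← hyx]; noncomm_ring
    _ ≤ (x * g).rank := LinearMap.rank_comp_le_left _ _
    _ ≤ g.rank := LinearMap.rank_comp_le_right _ _

theorem rank_eq_of_mul_eq_of_mul_eq {f g x y : End K V} (hf : IsIdempotentElem f)
    (hg : IsIdempotentElem g) (hxy : x * y = f) (hyx : y * x = g) : f.rank = g.rank :=
  (rank_le_of_mul_eq_of_mul_eq hf hxy hyx).antisymm (rank_le_of_mul_eq_of_mul_eq hg hyx hxy)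

theorem rank_mul_mul_eq {f e u v : End K V} (hf : IsIdempotentElem f) (hfe : f * e = f)
    (hvu : v * u = e) : (u * f * v).rank = f.rank := by
  have hfvuf : f * (v * u) * f = f := by rw [hvu, hfe, hf.eq]
  refine rank_eq_of_mul_eq_of_mul_eq ?_ hf (x := u * f) (y := f * v) ?_ ?_
  · calc u * f * v * (u * f * v) = u * (f * (v * u) * f) * v := by noncomm_ring
      _ = u * f * v := by rw [hfvuf, mul_assoc]
  · rw [mul_assoc, ← mul_assoc f, hf.eq, mul_assoc]
  · rw [← mul_assoc, mul_assoc f v u, hfvuf]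

end Module.End

theorem CompleteOrthogonalIdempotents.isInternal_range {R M ι : Type*} [Ring R]
    [AddCommGroup M] [Module R M] [Fintype ι] [DecidableEq ι] {f : ι → Module.End R M}
    (hf : CompleteOrthogonalIdempotents f) :
    DirectSum.IsInternal (fun i => LinearMap.range (f i)) := by
  have fixes : ∀ i, ∀ v ∈ LinearMap.range (f i), f i v = v := by
    rintro i _ ⟨w, rfl⟩
    exact congrArg (· w) (hf.idem i).eq
  refine (DirectSum.isInternal_submodule_iff_iSupIndep_and_iSup_eq_top _).2 ⟨fun i => ?_, ?_⟩
  · have kills : ⨆ (j) (_ : j ≠ i), LinearMap.range (f j) ≤ LinearMap.ker (f i) :=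
      iSup₂_le fun j hji => by
        rintro _ ⟨w, rfl⟩
        exact congrArg (· w) (hf.ortho hji.symm)
    refine Submodule.disjoint_def.2 fun v hv hv' => ?_
    rw [← fixes i v hv]
    exact kills hv'
  · refine eq_top_iff.2 fun v _ => ?_
    have : v = ∑ i, f i v := by
      simpa using congrArg (· v) hf.complete.symm
    rw [this]
    exact Submodule.sum_mem _ fun i _ => Submodule.mem_iSup_of_mem i ⟨v, rfl⟩

theorem DirectSum.IsInternal.finrank_eq_sum {K V ι : Type*} [DivisionRing K] [AddCommGroup V]
    [Module K V] [FiniteDimensional K V] [Fintype ι] [DecidableEq ι] {W : ι → Submodule K V}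
    (h : DirectSum.IsInternal W) : finrank K V = ∑ i, finrank K (W i) := by
  rw [← (LinearEquiv.ofBijective (DirectSum.coeLinearMap W) h).finrank_eq, finrank_directSum]

namespace Submodule

section RestrictScalars

variable {R K V ι : Type*} [Semiring R] [Semiring K] [AddCommMonoid V] [Module R V] [Module K V]
  [SMul R K] [IsScalarTower R K V]

theorem _root_.iSupIndep.restrictScalars {W : ι → Submodule K V} (h : iSupIndep W) :
    iSupIndep (fun i => (W i).restrictScalars R) := fun i => by
  simpa only [disjoint_iff, ← restrictScalars_iSup, ← restrictScalars_inf,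
    restrictScalars_eq_bot_iff] using h i

theorem span_coe_iSup (N : ι → Submodule R V) :
    span K ((⨆ i, N i : Submodule R V) : Set V) = ⨆ i, span K (N i : Set V) := by
  rw [iSup_eq_span, span_span_of_tower, span_iUnion]

end RestrictScalars

section FractionRing

variable {R K V : Type*} [CommRing R] [Field K] [Algebra R K] [IsFractionRing R K]
  [AddCommGroup V] [Module K V] [Module R V] [IsScalarTower R K V]

theorem mem_span_iff_exists_smul_mem (N : Submodule R V) {v : V} :
    v ∈ span K (N : Set V) ↔ ∃ s ∈ R⁰, s • v ∈ N := by
  have := isLocalizedModule_id R⁰ V K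
  rw [← Set.image_id (N : Set V), ← LinearMap.id_coe (R := R), ← localized'_eq_span K R⁰,
    mem_localized']
  simp only [IsLocalizedModule.mk'_eq_iff, LinearMap.id_coe, id_eq]
  constructor
  · rintro ⟨m, hm, s, rfl⟩
    exact ⟨s, s.2, hm⟩
  · rintro ⟨s, hs, hsv⟩
    exact ⟨_, hsv, ⟨s, hs⟩, rfl⟩

theorem finrank_span_eq_finrank_of_isFractionRing (N : Submodule R V) :
    finrank K (span K (N : Set V)) = finrank R N := by
  have := isLocalizedModule_id R⁰ V K
  have h := localized'_eq_span K R⁰ (LinearMap.id : V →ₗ[R] V) N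
  rw [LinearMap.id_coe, Set.image_id] at h
  rw [← h, IsFractionRing.finrank_right_eq R K,
    IsLocalizedModule.finrank_eq R⁰ (N.toLocalized' K R⁰ LinearMap.id) le_rfl]

theorem span_inf_restrictScalars {L : Submodule R V} (hL : span K (L : Set V) = ⊤)
    (W : Submodule K V) : span K ((L ⊓ W.restrictScalars R : Submodule R V) : Set V) = W := by
  refine le_antisymm (span_le.2 fun w hw => hw.2) fun w hw => ?_
  obtain ⟨s, hs, hsw⟩ := (mem_span_iff_exists_smul_mem L).1 (hL ▸ mem_top : w ∈ span K (L : Set V))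
  exact (mem_span_iff_exists_smul_mem _).2 ⟨s, hs, hsw, W.smul_of_tower_mem s hw⟩

end FractionRing

theorem finiteIndex_addSubgroupOf_of_span_eq_top {V : Type*} [AddCommGroup V] [Module ℚ V]
    {S : Submodule ℤ V} (hS : span ℚ (S : Set V) = ⊤) (L : Submodule ℤ V) [Module.Finite ℤ L] :
    (S.toAddSubgroup.addSubgroupOf L.toAddSubgroup).FiniteIndex := by
  set K := S.comap L.subtype
  have torsion : Module.IsTorsion ℤ (L ⧸ K) := by
    intro q
    obtain ⟨z, rfl⟩ := K.mkQ_surjective q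
    obtain ⟨s, hs, hsz⟩ :=
      (mem_span_iff_exists_smul_mem S).1 (hS ▸ mem_top : (z : V) ∈ span ℚ (S : Set V))
    exact ⟨⟨s, hs⟩, (Quotient.mk_eq_zero K).2 hsz⟩
  have : Finite (L ⧸ K) := Module.finite_of_fg_torsion _ torsion
  have : Finite (L.toAddSubgroup ⧸ S.toAddSubgroup.addSubgroupOf L.toAddSubgroup) := this
  exact AddSubgroup.finiteIndex_of_finite_quotient

end Submodule

theorem TensorProduct.span_range_mk_one {R A M : Type*} [CommRing R] [CommRing A] [Algebra R A]
    [AddCommGroup M] [Module R M] :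
    Submodule.span A (Set.range (TensorProduct.mk R A M 1)) = ⊤ := by
  rw [eq_top_iff]
  rintro v -
  induction v using TensorProduct.induction_on with
  | zero => exact zero_mem _
  | tmul a m =>
    have : a ⊗ₜ[R] m = a • (1 ⊗ₜ m) := by rw [TensorProduct.smul_tmul', smul_eq_mul, mul_one]
    exact this ▸ Submodule.smul_mem _ a (Submodule.subset_span ⟨m, rfl⟩)
  | add x y hx hy => exact add_mem hx hy

theorem stmt8_general (G : Type) [Group G]
    (Λ : Type) [AddCommGroup Λ] [Module ℤ Λ] [Module.Free ℤ Λ] [Module.Finite ℤ Λ]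
    (r : ℕ) (e : Fin r → MonoidAlgebra ℚ G)
    (horth : ∀ i j, i ≠ j → e i * e j = 0)
    (hsum : ∑ i, e i = 1)
    (n : Fin r → ℕ) (hn : ∀ i, 0 < n i)
    (p : (i : Fin r) → Fin (n i) → MonoidAlgebra ℚ G)
    (hidem : ∀ i j, p i j * p i j = p i j)
    (porth : ∀ i j k, j ≠ k → p i j * p i k = 0)
    (psum : ∀ i, ∑ j, p i j = e i)
    -- within each `i` the `p i j` are pairwise conjugate by units of `(e i)·ℚ[G]`:
    (pconj : ∀ i j, ∃ u v : MonoidAlgebra ℚ G,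
      e i * u = u ∧ e i * v = v ∧ u * v = e i ∧ v * u = e i ∧
      p i j = u * p i ⟨0, hn i⟩ * v)
    (ρQ : Representation ℚ G (ℚ ⊗[ℤ] Λ))
    (ΛZ : Submodule ℤ (ℚ ⊗[ℤ] Λ))
    (hΛZ : ΛZ = LinearMap.range (TensorProduct.mk ℤ ℚ Λ 1))
    (Λp : (i : Fin r) → Fin (n i) → Submodule ℤ (ℚ ⊗[ℤ] Λ))
    (hΛp : ∀ i j, Λp i j =
      ΛZ ⊓ (LinearMap.range (Representation.asAlgebraHom ρQ (p i j))).restrictScalars ℤ) :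
    Module.finrank ℤ Λ = ∑ i, n i * Module.finrank ℤ (Λp i ⟨0, hn i⟩) ∧
    iSupIndep (fun x : Σ i : Fin r, Fin (n i) => Λp x.1 x.2) ∧
    ((⨆ x : Σ i : Fin r, Fin (n i), Λp x.1 x.2).toAddSubgroup.addSubgroupOf
        ΛZ.toAddSubgroup).FiniteIndex := by
  classical
  set φ := Representation.asAlgebraHom ρQ
  set W := fun x : Σ i : Fin r, Fin (n i) => LinearMap.range (φ (p x.1 x.2))
  have hp : ∀ i, OrthogonalIdempotents (p i) := fun i => ⟨hidem i, fun j k => porth i j k⟩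
  have hP : CompleteOrthogonalIdempotents (fun x : Σ i : Fin r, Fin (n i) => p x.1 x.2) :=
    (CompleteOrthogonalIdempotents.iff_ortho_complete.2 ⟨horth, hsum⟩).sigma hp psum
  have hW : DirectSum.IsInternal W := (hP.map φ.toRingHom).isInternal_range
  have hspan : ∀ x, Submodule.span ℚ (Λp x.1 x.2 : Set (ℚ ⊗[ℤ] Λ)) = W x := fun x => by
    rw [hΛp]
    exact Submodule.span_inf_restrictScalars (hΛZ ▸ TensorProduct.span_range_mk_one) _
  have hfinrank : ∀ x, finrank ℚ (W x) = finrank ℤ (Λp x.1 x.2) := fun x => by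
    rw [← hspan, Submodule.finrank_span_eq_finrank_of_isFractionRing]
  have hconj : ∀ i j, finrank ℚ (W ⟨i, j⟩) = finrank ℚ (W ⟨i, ⟨0, hn i⟩⟩) := fun i j => by
    obtain ⟨u, v, -, -, -, hvu, hpj⟩ := pconj i j
    have hpe : p i ⟨0, hn i⟩ * e i = p i ⟨0, hn i⟩ := by
      rw [← psum i, (hp i).mul_sum_of_mem (Finset.mem_univ _)]
    have := Module.End.rank_mul_mul_eq (u := φ u) (v := φ v) (((hp i).idem _).map φ)
      (by rw [← map_mul, hpe]) (by rw [← map_mul, hvu])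
    change finrank ℚ (LinearMap.range (φ (p i j))) = _
    rw [hpj, map_mul, map_mul]
    exact congrArg Cardinal.toNat this
  refine ⟨?_, ?_, ?_⟩
  · calc finrank ℤ Λ = finrank ℚ (ℚ ⊗[ℤ] Λ) := finrank_baseChange.symm
      _ = ∑ x, finrank ℚ (W x) := hW.finrank_eq_sum
      _ = ∑ i, ∑ j, finrank ℚ (W ⟨i, j⟩) := Fintype.sum_sigma _
      _ = ∑ i, n i * finrank ℤ (Λp i ⟨0, hn i⟩) := by
        simp only [hconj, hfinrank, Finset.sum_const, Finset.card_univ, Fintype.card_fin,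
          smul_eq_mul]
  · exact hW.submodule_iSupIndep.restrictScalars.mono fun x => (hΛp x.1 x.2).trans_le inf_le_right
  · have : Module.Finite ℤ ΛZ := hΛZ ▸ Module.Finite.range _
    refine Submodule.finiteIndex_addSubgroupOf_of_span_eq_top ?_ ΛZ
    rw [Submodule.span_coe_iSup]
    simp only [hspan]
    exact hW.submodule_iSup_eq_top

/-- With `G` acting `ℤ`-linearly on a free `ℤ`-module `Λ` of finite rank and
`V = ℚ ⊗_ℤ Λ` (with `Λ` embedded as `ΛZ` via `x ↦ 1 ⊗ x`), let `1 = e 1 + … + e r` be the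
decomposition of `1 ∈ ℚ[G]` into pairwise orthogonal central idempotents, and for each `i`
let `e i = p i 1 + … + p i nᵢ` be a decomposition into pairwise orthogonal idempotents that
are pairwise conjugate by units of `(e i)·ℚ[G]`.  Then
`rank Λ = ∑ i, nᵢ · rank (Λ ∩ (p i 1)·V)`, and the direct sum of all the subgroups
`Λ ∩ (p i j)·V` has finite index in `Λ`. -/
theorem stmt8 (G : Type) [Group G] [Fintype G]
    (Λ : Type) [AddCommGroup Λ] [Module ℤ Λ] [Module.Free ℤ Λ] [Module.Finite ℤ Λ]
    (ρ : Representation ℤ G Λ)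
    (r : ℕ) (e : Fin r → MonoidAlgebra ℚ G)
    (hcent : ∀ i, e i ∈ Subalgebra.center ℚ (MonoidAlgebra ℚ G))
    (horth : ∀ i j, i ≠ j → e i * e j = 0)
    (hsum : ∑ i, e i = 1)
    (n : Fin r → ℕ) (hn : ∀ i, 0 < n i)
    (p : (i : Fin r) → Fin (n i) → MonoidAlgebra ℚ G)
    (hidem : ∀ i j, p i j * p i j = p i j)
    (porth : ∀ i j k, j ≠ k → p i j * p i k = 0)
    (psum : ∀ i, ∑ j, p i j = e i)
    -- within each `i` the `p i j` are pairwise conjugate by units of `(e i)·ℚ[G]`: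
    (pconj : ∀ i j, ∃ u v : MonoidAlgebra ℚ G,
      e i * u = u ∧ e i * v = v ∧ u * v = e i ∧ v * u = e i ∧
      p i j = u * p i ⟨0, hn i⟩ * v)
    (ρQ : Representation ℚ G (ℚ ⊗[ℤ] Λ))
    (hρQ : ∀ g : G, ρQ g = LinearMap.baseChange ℚ (ρ g))
    (ΛZ : Submodule ℤ (ℚ ⊗[ℤ] Λ))
    (hΛZ : ΛZ = LinearMap.range (TensorProduct.mk ℤ ℚ Λ 1))
    (Λp : (i : Fin r) → Fin (n i) → Submodule ℤ (ℚ ⊗[ℤ] Λ))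
    (hΛp : ∀ i j, Λp i j =
      ΛZ ⊓ (LinearMap.range (Representation.asAlgebraHom ρQ (p i j))).restrictScalars ℤ) :
    Module.finrank ℤ Λ = ∑ i, n i * Module.finrank ℤ (Λp i ⟨0, hn i⟩) ∧
    iSupIndep (fun x : Σ i : Fin r, Fin (n i) => Λp x.1 x.2) ∧
    ((⨆ x : Σ i : Fin r, Fin (n i), Λp x.1 x.2).toAddSubgroup.addSubgroupOf
        ΛZ.toAddSubgroup).FiniteIndex :=
  stmt8_general G Λ r e horth hsum n hn p hidem porth psum pconj ρQ ΛZ hΛZ Λp hΛp
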